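/- Let p be a prime and suppose (P_n)_{n≥0} is a sequence with P_n ∈ Λ_n = Z_p[G_n] satisfying: P_0, P_1 are units, π_{n+1/n}(P_{n+1}) = a·P_n - ν_{n-1/n}(P_{n-1}) for n ≥ 1 with a ∈ pZ_p, and π_{1/0}(P_1) = u·P_0 with u ∈ Z_p^×. Then μ(P_n) = 0 for all n ≥ 0. -/

import Mathlib

open MonoidAlgebra Finset

/-- `G_n`: cyclic group of order `p^n`. -/
abbrev Gn (p n : ℕ) := Multiplicative (ZMod (p ^ n))

/-- `Λ_n = ℤ_p[G_n]`. -/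
abbrev Lam (p : ℕ) [Fact p.Prime] (n : ℕ) := MonoidAlgebra ℤ_[p] (Gn p n)

/-- `ξ_n`: sum of the elements of the subgroup of order `p`. -/
noncomputable def xi (p : ℕ) [Fact p.Prime] (n : ℕ) : Lam p n :=
  ∑ σ ∈ Finset.univ.filter (fun σ : Gn p n => σ ^ p = 1), MonoidAlgebra.of ℤ_[p] (Gn p n) σ

/-- The natural surjection `G_{n+1} →* G_n`. -/
noncomputable def projHom (p n : ℕ) : Gn p (n+1) →* Gn p n :=
  AddMonoidHom.toMultiplicative
    (ZMod.castHom (pow_dvd_pow p (Nat.le_succ n)) (ZMod (p^n))).toAddMonoidHom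

/-- `π_{n+1/n} : Λ_{n+1} →+* Λ_n`, the induced projection of group algebras. -/
noncomputable def piMap (p : ℕ) [Fact p.Prime] (n : ℕ) : Lam p (n+1) →+* Lam p n :=
  MonoidAlgebra.mapDomainRingHom ℤ_[p] (projHom p n)

/-- `ν_{n/n+1} : Λ_n → Λ_{n+1}`, sending `σ` to the sum of its preimages. -/
noncomputable def nuMap (p : ℕ) [Fact p.Prime] (n : ℕ) (f : Lam p n) : Lam p (n+1) :=
  ∑ τ : Gn p (n+1), MonoidAlgebra.single τ (f.coeff (projHom p n τ))

/-- Reduction mod `p`: `ℤ_p[G_n] → 𝔽_p[G_n]` (coefficientwise). -/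
noncomputable def red (p : ℕ) [Fact p.Prime] (n : ℕ) (f : Lam p n) :
    MonoidAlgebra (ZMod p) (Gn p n) :=
  MonoidAlgebra.ofCoeff (Finsupp.mapRange (PadicInt.toZMod) (map_zero _) f.coeff)

/-- The augmentation ideal `Ĩ_n` of `𝔽_p[G_n]`. -/
noncomputable def augIdeal (p : ℕ) [Fact p.Prime] (n : ℕ) :
    Ideal (MonoidAlgebra (ZMod p) (Gn p n)) :=
  RingHom.ker ((MonoidAlgebra.lift (ZMod p) (ZMod p) (Gn p n)) 1).toRingHom

namespace MonoidAlgebra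

variable {R M : Type*} [CommSemiring R] [Monoid M]

theorem algebraMap_dvd_iff {r : R} {f : R[M]} :
    algebraMap R R[M] r ∣ f ↔ ∀ m, r ∣ f.coeff m := by
  constructor
  · rintro ⟨g, rfl⟩ m
    rw [← Algebra.smul_def, coeff_smul_apply, smul_eq_mul]
    exact dvd_mul_right r _
  · intro h
    rw [← sum_coeff_single f]
    refine Finset.dvd_sum fun m _ => ?_
    obtain ⟨c, hc⟩ := h m
    rw [hc, ← smul_eq_mul, ← smul_single, Algebra.smul_def]
    exact dvd_mul_right _ _

theorem not_isUnit_algebraMap {r : R} (hr : ¬IsUnit r) : ¬IsUnit (algebraMap R R[M] r) :=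
  fun h => hr (by simpa using h.map (MonoidAlgebra.lift R R M 1))

end MonoidAlgebra

theorem projHom_surjective (p n : ℕ) : Function.Surjective (projHom p n) := fun σ =>
  (ZMod.ringHom_surjective (ZMod.castHom (pow_dvd_pow p n.le_succ) (ZMod (p ^ n))) σ.toAdd).imp
    fun _ hx => congrArg Multiplicative.ofAdd hx

section GroupAlgebra

variable (p : ℕ) [Fact p.Prime]

theorem natCast_eq_algebraMap (n : ℕ) : (p : Lam p n) = algebraMap ℤ_[p] (Lam p n) p :=
  (map_natCast _ p).symm

variable {p}

theorem natCast_dvd_iff {n : ℕ} {f : Lam p n} :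
    (p : Lam p n) ∣ f ↔ ∀ σ, (p : ℤ_[p]) ∣ f.coeff σ := by
  rw [natCast_eq_algebraMap, algebraMap_dvd_iff]

theorem not_natCast_dvd_of_isUnit {n : ℕ} {f : Lam p n} (hf : IsUnit f) :
    ¬(p : Lam p n) ∣ f := fun h => by
  have := isUnit_of_dvd_unit h hf
  rw [natCast_eq_algebraMap] at this
  exact not_isUnit_algebraMap PadicInt.prime_p.not_isUnit this

theorem coeff_nuMap {n : ℕ} (f : Lam p n) (τ : Gn p (n + 1)) :
    (nuMap p n f).coeff τ = f.coeff (projHom p n τ) := by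
  classical
  simp [nuMap, coeff_sum, coeff_single, Finsupp.single_apply]

theorem natCast_dvd_nuMap_iff {n : ℕ} {f : Lam p n} :
    (p : Lam p (n + 1)) ∣ nuMap p n f ↔ (p : Lam p n) ∣ f := by
  simp only [natCast_dvd_iff, coeff_nuMap]
  exact (projHom_surjective p n).forall (p := fun σ => (p : ℤ_[p]) ∣ f.coeff σ) |>.symm

theorem natCast_dvd_piMap {n : ℕ} {f : Lam p (n + 1)} (h : (p : Lam p (n + 1)) ∣ f) :
    (p : Lam p n) ∣ piMap p n f := by
  simpa using map_dvd (piMap p n) h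

theorem natCast_dvd_smul {n : ℕ} {a : ℤ_[p]} (ha : (p : ℤ_[p]) ∣ a) (f : Lam p n) :
    (p : Lam p n) ∣ a • f := by
  rw [Algebra.smul_def, natCast_eq_algebraMap]
  exact dvd_mul_of_dvd_left (map_dvd _ ha) f

/-- Reducing modulo `p`, the recurrence reads `π(P_{n+2}) ≡ -ν(P_n)`, and `ν` detects
divisibility by `p` since `π` is surjective on groups. -/
theorem natCast_dvd_of_piMap_eq_smul_sub_nuMap {n : ℕ} {x : Lam p (n + 2)} {y : Lam p (n + 1)}
    {z : Lam p n} {a : ℤ_[p]} (ha : (p : ℤ_[p]) ∣ a)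
    (h : piMap p (n + 1) x = a • y - nuMap p n z) (hx : (p : Lam p (n + 2)) ∣ x) :
    (p : Lam p n) ∣ z := by
  have hpi := natCast_dvd_piMap hx
  rw [h] at hpi
  rw [← natCast_dvd_nuMap_iff, ← sub_sub_cancel (a • y) (nuMap p n z)]
  exact dvd_sub (natCast_dvd_smul ha y) hpi

end GroupAlgebra

theorem stmt16_general (p : ℕ) [Fact p.Prime] (P : ∀ n, Lam p n)
    (hP0 : IsUnit (P 0)) (hP1 : IsUnit (P 1))
    (a : ℤ_[p]) (ha : (p : ℤ_[p]) ∣ a)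
    (hrec : ∀ n : ℕ, piMap p (n+1) (P (n+2)) = a • P (n+1) - nuMap p n (P n)) :
    ∀ n : ℕ, ¬ (p : Lam p n) ∣ P n := by
  refine Nat.twoStepInduction (not_natCast_dvd_of_isUnit hP0) (not_natCast_dvd_of_isUnit hP1) ?_
  intro n hn _ hdvd
  exact hn (natCast_dvd_of_piMap_eq_smul_sub_nuMap ha (hrec n) hdvd)

/-- For a sequence `P_n ∈ Λ_n` with `P_0, P_1` units,
`π(P_{n+2}) = a·P_{n+1} - ν(P_n)` (`a ∈ pℤ_p`) and `π(P_1) = u·P_0`,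
one has `μ(P_n) = 0` for all `n`. -/
theorem stmt16 (p : ℕ) [Fact p.Prime] (P : ∀ n, Lam p n)
    (hP0 : IsUnit (P 0)) (hP1 : IsUnit (P 1))
    (a : ℤ_[p]) (ha : (p : ℤ_[p]) ∣ a)
    (hrec : ∀ n : ℕ, piMap p (n+1) (P (n+2)) = a • P (n+1) - nuMap p n (P n))
    (hP10 : ∃ u : ℤ_[p], IsUnit u ∧ piMap p 0 (P 1) = u • P 0) :
    ∀ n : ℕ, ¬ (p : Lam p n) ∣ P n :=
  stmt16_general p P hP0 hP1 a ha hrec
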